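/- arXiv:1903.04213 — 2 statements merged into one kernel-verified Lean document; each statement's English description precedes it below -/
import Mathlib

section
/- (Optimal Weighted Voting Scheme.) Let n ≥ 1, p₁,…,pₙ ∈ (0,1), α ∈ (0,1), and ℓ_a, ℓ_r > 0. For a decision rule f : {-1,1}ⁿ → {-1,1} define the expected collective welfare E(f) := (1-α)(1+ℓ_r) · ∑_{x : f(x)=1} ∏_{i : xᵢ=1} pᵢ ∏_{j : xⱼ=-1} (1-pⱼ) + α(1+ℓ_a) · ∑_{x : f(x)=-1} ∏_{i : xᵢ=-1} pᵢ ∏_{j : xⱼ=1} (1-pⱼ). Set wᵢ := ln(pᵢ/(1-pᵢ)) for each i, w := ∑_{i=1}^n wᵢ, and suppose w ≠ 0; set q̄ := (1/2)·[1 - (ln((1-α)/α) + ln((1+ℓ_r)/(1+ℓ_a)))/w]. Then the weighted majority rule f_{q̄}, defined by f_{q̄}(x) = 1 if ∑_{i=1}^n wᵢ xᵢ ≥ (2q̄-1)·w and f_{q̄}(x) = -1 otherwise, satisfies E(f) ≤ E(f_{q̄}) for every decision rule f : {-1,1}ⁿ → {-1,1}. -/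
open Finset Real

/-- Expected collective welfare of a decision rule `f` on `{-1,1}ⁿ` (encoded as
integer-valued vote vectors with entries `-1` or `1`), given voting profiles `p`,
prior probability `α` of an invalid block, and losses `ℓa`, `ℓr`:
`E(f) = (1-α)(1+ℓ_r) ∑_{x : f(x)=1} ∏_{i:xᵢ=1} pᵢ ∏_{j:xⱼ=-1}(1-pⱼ)
       + α(1+ℓ_a) ∑_{x : f(x)=-1} ∏_{i:xᵢ=-1} pᵢ ∏_{j:xⱼ=1}(1-pⱼ)`. -/
noncomputable def expectedWelfare (n : ℕ) (p : Fin n → ℝ) (α ℓa ℓr : ℝ)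
    (f : (Fin n → ℤ) → ℤ) : ℝ :=
  (1 - α) * (1 + ℓr) *
      ∑ x ∈ Finset.univ.filter
          (fun x : Fin n → (({-1, 1} : Finset ℤ) : Type) => f (fun i => (x i : ℤ)) = 1),
        ((∏ i ∈ Finset.univ.filter (fun i => (x i : ℤ) = 1), p i) *
          ∏ j ∈ Finset.univ.filter (fun j => (x j : ℤ) = -1), (1 - p j)) +
    α * (1 + ℓa) *
      ∑ x ∈ Finset.univ.filter
          (fun x : Fin n → (({-1, 1} : Finset ℤ) : Type) => f (fun i => (x i : ℤ)) = -1),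
        ((∏ i ∈ Finset.univ.filter (fun i => (x i : ℤ) = -1), p i) *
          ∏ j ∈ Finset.univ.filter (fun j => (x j : ℤ) = 1), (1 - p j))

/-!
Conditioning on the vote profile `x`, the welfare of a rule is a sum over `x` of either
`(1-α)(1+ℓ_r)·P(x | valid)` (if the rule approves) or `α(1+ℓ_a)·P(x | invalid)` (if it rejects),
so a rule is optimal as soon as it picks the larger of the two terms at every `x`. Taking logarithms,
the valid term is the larger one exactly when `∑ wᵢ xᵢ ≥ log(α(1+ℓ_a)) - log((1-α)(1+ℓ_r))`,
and this threshold is `(2q̄-1)·w`.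
-/

section BayesRule

variable {Ω : Type*} [Fintype Ω]

theorem sum_ite_add_ite_le_of_bayes (a b : Ω → ℝ) (ha : ∀ x, 0 ≤ a x)
    (g h : Ω → ℤ) {P : Ω → Prop} [DecidablePred P] (hP : ∀ x, P x ↔ b x ≤ a x)
    (hh : ∀ x, h x = if P x then 1 else -1) :
    ∑ x, ((if g x = 1 then a x else 0) + (if g x = -1 then b x else 0)) ≤
      ∑ x, ((if h x = 1 then a x else 0) + (if h x = -1 then b x else 0)) := by
  refine sum_le_sum fun x _ => ?_
  have := hP x
  rw [hh x]
  split_ifs <;> grind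

end BayesRule

section VoteProfiles

variable {ι : Type*} [Fintype ι]

/-- The probability of the vote profile `x ∈ {-1,1}^ι` when voter `i` votes `1` independently
with probability `p i`. -/
noncomputable def voteProfileProb (p : ι → ℝ) (x : ι → ℤ) : ℝ :=
  ∏ i, if x i = 1 then p i else 1 - p i

variable {p : ι → ℝ} {x : ι → ℤ}

theorem voteProfileProb_pos (hp : ∀ i, p i ∈ Set.Ioo (0 : ℝ) 1) : 0 < voteProfileProb p x :=
  prod_pos fun i _ => by split_ifs <;> linarith [(hp i).1, (hp i).2]

theorem voteProfileProb_one_sub_pos (hp : ∀ i, p i ∈ Set.Ioo (0 : ℝ) 1) :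
    0 < voteProfileProb (fun i => 1 - p i) x :=
  voteProfileProb_pos fun i => ⟨by linarith [(hp i).2], by linarith [(hp i).1]⟩

theorem voteProfileProb_eq_prod_filter (hx : ∀ i, x i = 1 ∨ x i = -1) :
    voteProfileProb p x = (∏ i with x i = 1, p i) * ∏ i with x i = -1, (1 - p i) := by
  rw [voteProfileProb, prod_filter, prod_filter, ← prod_mul_distrib]
  refine prod_congr rfl fun i _ => ?_
  rcases hx i with h | h <;> simp [h]

theorem voteProfileProb_one_sub_eq_prod_filter (hx : ∀ i, x i = 1 ∨ x i = -1) :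
    voteProfileProb (fun i => 1 - p i) x =
      (∏ i with x i = -1, p i) * ∏ i with x i = 1, (1 - p i) := by
  rw [voteProfileProb, prod_filter, prod_filter, ← prod_mul_distrib]
  refine prod_congr rfl fun i _ => ?_
  rcases hx i with h | h <;> simp [h]

theorem log_voteProfileProb_sub_log (hp : ∀ i, p i ∈ Set.Ioo (0 : ℝ) 1)
    (hx : ∀ i, x i = 1 ∨ x i = -1) :
    log (voteProfileProb p x) - log (voteProfileProb (fun i => 1 - p i) x) =
      ∑ i, log (p i / (1 - p i)) * x i := by
  unfold voteProfileProb
  rw [log_prod fun i _ => (ne_of_gt (by split_ifs <;> linarith [(hp i).1, (hp i).2])),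
    log_prod fun i _ => (ne_of_gt (by split_ifs <;> linarith [(hp i).1, (hp i).2])),
    ← sum_sub_distrib]
  refine sum_congr rfl fun i _ => ?_
  have hpi : 0 < p i := (hp i).1
  have hqi : 0 < 1 - p i := by linarith [(hp i).2]
  rw [log_div hpi.ne' hqi.ne']
  rcases hx i with h | h <;> simp [h]

theorem mul_voteProfileProb_le_iff {A B : ℝ} (hA : 0 < A) (hB : 0 < B)
    (hp : ∀ i, p i ∈ Set.Ioo (0 : ℝ) 1) (hx : ∀ i, x i = 1 ∨ x i = -1) :
    B * voteProfileProb (fun i => 1 - p i) x ≤ A * voteProfileProb p x ↔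
      log B - log A ≤ ∑ i, log (p i / (1 - p i)) * x i := by
  have h1 := voteProfileProb_pos (x := x) hp
  have h0 := voteProfileProb_one_sub_pos (x := x) hp
  rw [← log_le_log_iff (mul_pos hB h0) (mul_pos hA h1), log_mul hB.ne' h0.ne',
    log_mul hA.ne' h1.ne', ← log_voteProfileProb_sub_log hp hx]
  constructor <;> intro <;> linarith

end VoteProfiles

theorem coe_vote_eq_one_or_eq_neg_one (v : (({-1, 1} : Finset ℤ) : Type)) :
    (v : ℤ) = 1 ∨ (v : ℤ) = -1 := by
  simpa only [mem_insert, mem_singleton, or_comm] using v.2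

theorem expectedWelfare_eq_sum (n : ℕ) (p : Fin n → ℝ) (α ℓa ℓr : ℝ) (f : (Fin n → ℤ) → ℤ) :
    expectedWelfare n p α ℓa ℓr f =
      ∑ x : Fin n → (({-1, 1} : Finset ℤ) : Type),
        ((if f (fun i => x i) = 1 then
            (1 - α) * (1 + ℓr) * voteProfileProb p (fun i => x i) else 0) +
          (if f (fun i => x i) = -1 then
            α * (1 + ℓa) * voteProfileProb (fun i => 1 - p i) (fun i => x i) else 0)) := by
  unfold expectedWelfare
  rw [mul_sum, mul_sum, sum_filter, sum_filter, ← sum_add_distrib]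
  refine sum_congr rfl fun x _ => ?_
  have hx i := coe_vote_eq_one_or_eq_neg_one (x i)
  rw [voteProfileProb_eq_prod_filter hx, voteProfileProb_one_sub_eq_prod_filter hx]

theorem stmt4_general (n : ℕ) (p : Fin n → ℝ) (hp : ∀ i, p i ∈ Set.Ioo (0 : ℝ) 1)
    (α : ℝ) (hα : α ∈ Set.Ioo (0 : ℝ) 1) (ℓa ℓr : ℝ) (hℓa : 0 < ℓa) (hℓr : 0 < ℓr)
    (w : Fin n → ℝ) (hw : ∀ i, w i = Real.log (p i / (1 - p i)))
    (W : ℝ) (hW0 : W ≠ 0)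
    (qbar : ℝ)
    (hqbar : qbar =
      (1 / 2) * (1 - (Real.log ((1 - α) / α) + Real.log ((1 + ℓr) / (1 + ℓa))) / W))
    (fq : (Fin n → ℤ) → ℤ)
    (hfq : ∀ x : Fin n → ℤ,
      fq x = if (∑ i, w i * (x i : ℝ)) ≥ (2 * qbar - 1) * W then 1 else -1)
    (f : (Fin n → ℤ) → ℤ) :
    expectedWelfare n p α ℓa ℓr f ≤ expectedWelfare n p α ℓa ℓr fq := by
  obtain ⟨hα0, hα1⟩ := hα
  have hα1' : 0 < 1 - α := sub_pos.2 hα1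
  have hℓa' : 0 < 1 + ℓa := by linarith
  have hℓr' : 0 < 1 + ℓr := by linarith
  have hA := mul_pos hα1' hℓr'
  have hB := mul_pos hα0 hℓa'
  have hthreshold : (2 * qbar - 1) * W = log (α * (1 + ℓa)) - log ((1 - α) * (1 + ℓr)) := by
    rw [hqbar, log_div hα1'.ne' hα0.ne', log_div hℓr'.ne' hℓa'.ne', log_mul hα0.ne' hℓa'.ne',
      log_mul hα1'.ne' hℓr'.ne']
    field_simp
    ring
  simp only [hw] at hfq
  rw [expectedWelfare_eq_sum, expectedWelfare_eq_sum]
  refine sum_ite_add_ite_le_of_bayes _ _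
    (fun x => (mul_pos hA (voteProfileProb_pos hp)).le) _ _ (fun x => ?_) (fun x => hfq _)
  rw [ge_iff_le, hthreshold]
  exact (mul_voteProfileProb_le_iff hA hB hp fun i => coe_vote_eq_one_or_eq_neg_one (x i)).symm

/-- Optimal Weighted Voting Scheme: with log-odds weights
`wᵢ = ln(pᵢ/(1-pᵢ))`, total weight `w = ∑ wᵢ ≠ 0`, and quota
`q̄ = (1/2)(1 - (ln((1-α)/α) + ln((1+ℓ_r)/(1+ℓ_a)))/w)`, the weighted majority rule
`f_q̄(x) = 1 ↔ ∑ wᵢxᵢ ≥ (2q̄-1)w` maximizes the expected collective welfare over all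
decision rules. -/
theorem stmt4 (n : ℕ) (hn : 1 ≤ n) (p : Fin n → ℝ) (hp : ∀ i, p i ∈ Set.Ioo (0 : ℝ) 1)
    (α : ℝ) (hα : α ∈ Set.Ioo (0 : ℝ) 1) (ℓa ℓr : ℝ) (hℓa : 0 < ℓa) (hℓr : 0 < ℓr)
    (w : Fin n → ℝ) (hw : ∀ i, w i = Real.log (p i / (1 - p i)))
    (W : ℝ) (hW : W = ∑ i, w i) (hW0 : W ≠ 0)
    (qbar : ℝ)
    (hqbar : qbar =
      (1 / 2) * (1 - (Real.log ((1 - α) / α) + Real.log ((1 + ℓr) / (1 + ℓa))) / W))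
    (fq : (Fin n → ℤ) → ℤ)
    (hfq : ∀ x : Fin n → ℤ,
      fq x = if (∑ i, w i * (x i : ℝ)) ≥ (2 * qbar - 1) * W then 1 else -1)
    (f : (Fin n → ℤ) → ℤ) (hf : ∀ x, f x = -1 ∨ f x = 1) :
    expectedWelfare n p α ℓa ℓr f ≤ expectedWelfare n p α ℓa ℓr fq :=
  stmt4_general n p hp α hα ℓa ℓr hℓa hℓr w hw W hW0 qbar hqbar fq hfq f
end

section
/- (Tolerance of validator faulty behavior.) Let δ ∈ (0,1), 0 < ℓ_r < ℓ_a, and let q, q₁ ∈ [0,1] with q + q₁ ≤ 1. Let T ≥ 1 be an integer and p₀ > 0, and define p_T := ((1+δ)^q · (1-δ)^(ℓ_r·q₁ + ℓ_a·(1-q-q₁)))^T · p₀. Define c₁ := (1 - ln(1+δ)/(ℓ_a · ln(1-δ)))⁻¹ and c₂ := 1 - ℓ_r/ℓ_a. Then p_T ≥ p₀ if and only if q ≥ c₁ · (1 - c₂·q₁). -/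
open Real

/-- Tolerance of validator faulty behavior: under the multiplicative
weights update scheme with parameter `δ ∈ (0,1)` and penalty exponents
`0 < ℓ_r < ℓ_a`, a validator voting correctly a fraction `q` of the time, failing to
vote on valid blocks a fraction `q₁` of the time (with `q + q₁ ≤ 1`), has profile
`p_T = ((1+δ)^q (1-δ)^(ℓ_r q₁ + ℓ_a (1-q-q₁)))^T p₀` after `T ≥ 1` slots, and
`p_T ≥ p₀` iff `q ≥ c₁(1 - c₂ q₁)` with `c₁ = (1 - ln(1+δ)/(ℓ_a ln(1-δ)))⁻¹` and
`c₂ = 1 - ℓ_r/ℓ_a`. -/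
theorem stmt9 (δ ℓa ℓr : ℝ) (hδ : δ ∈ Set.Ioo (0 : ℝ) 1)
    (hℓr : 0 < ℓr) (hℓ : ℓr < ℓa)
    (q q₁ : ℝ) (hq : q ∈ Set.Icc (0 : ℝ) 1) (hq₁ : q₁ ∈ Set.Icc (0 : ℝ) 1)
    (hqq₁ : q + q₁ ≤ 1)
    (T : ℕ) (hT : 1 ≤ T) (p₀ : ℝ) (hp₀ : 0 < p₀)
    (pT : ℝ)
    (hpT : pT =
      ((1 + δ) ^ q * (1 - δ) ^ (ℓr * q₁ + ℓa * (1 - q - q₁))) ^ T * p₀)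
    (c₁ c₂ : ℝ)
    (hc₁ : c₁ = (1 - Real.log (1 + δ) / (ℓa * Real.log (1 - δ)))⁻¹)
    (hc₂ : c₂ = 1 - ℓr / ℓa) :
    pT ≥ p₀ ↔ q ≥ c₁ * (1 - c₂ * q₁) := by
  obtain ⟨hδ0, hδ1⟩ := hδ
  have h1p : (1 : ℝ) < 1 + δ := by linarith
  have h1m0 : (0 : ℝ) < 1 - δ := by linarith
  have h1m1 : 1 - δ < 1 := by linarith
  have hℓa : 0 < ℓa := hℓr.trans hℓ
  set Lp := Real.log (1 + δ) with hLp'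
  set Lm := Real.log (1 - δ) with hLm'
  have hLp : 0 < Lp := Real.log_pos h1p
  have hLm : Lm < 0 := Real.log_neg h1m0 h1m1
  have hD : 0 < Lp - ℓa * Lm := by nlinarith
  set a : ℝ := (1 + δ) ^ q * (1 - δ) ^ (ℓr * q₁ + ℓa * (1 - q - q₁)) with ha'
  have ha : 0 < a := mul_pos (Real.rpow_pos_of_pos (by linarith) q)
    (Real.rpow_pos_of_pos h1m0 _)
  have hloga : Real.log a = q * Lp + (ℓr * q₁ + ℓa * (1 - q - q₁)) * Lm := by
    rw [ha', Real.log_mul (ne_of_gt (Real.rpow_pos_of_pos (by linarith) q))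
      (ne_of_gt (Real.rpow_pos_of_pos h1m0 _)), Real.log_rpow (by linarith),
      Real.log_rpow h1m0]
  have step1 : pT ≥ p₀ ↔ 1 ≤ a := by
    rw [hpT, ge_iff_le]
    rw [show p₀ ≤ a ^ T * p₀ ↔ 1 ≤ a ^ T by
      constructor
      · intro h
        nlinarith [pow_pos ha T]
      · intro h
        nlinarith]
    exact one_le_pow_iff_of_nonneg ha.le (by omega)
  have step2 : (1 ≤ a) ↔ 0 ≤ Real.log a := by
    constructor
    · exact Real.log_nonneg
    · intro h
      have := Real.exp_log ha
      nlinarith [Real.add_one_le_exp (Real.log a)]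
  have hne : ℓa * Lm ≠ 0 := mul_ne_zero hℓa.ne' hLm.ne
  have hc₁' : c₁ = -(ℓa * Lm) / (Lp - ℓa * Lm) := by
    rw [hc₁, one_sub_div hne, inv_div,
      div_eq_div_iff (ne_of_lt (by linarith : ℓa * Lm - Lp < 0)) hD.ne']
    ring
  rw [step1, step2, hloga, ge_iff_le, hc₁', div_mul_eq_mul_div,
    div_le_iff₀ hD, hc₂]
  have key : -(ℓa * Lm) * (1 - (1 - ℓr / ℓa) * q₁)
      = -((ℓr * q₁ + ℓa * (1 - q₁)) * Lm) := by
    field_simp [hℓa.ne']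
    ring
  rw [key]
  constructor <;> intro h <;> nlinarith [h]
end
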